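/- If A is a self-adjoint linear operator on ℓ(Ω) satisfying ⟨Af, f⟩ ≥ 0 for every function f : Ω → {-1, 0, 1}, then the iteration ψ_i(n) = min(argmax_{1≤m≤M} [(A μ_m^{(i-1)})(n) + R_m(n)]) has no cycle of length 2; combined with the length-1-or-2 result, every orbit converges to a fixed point. -/

import Mathlib

open Finset

noncomputable section

def ip {Ω : Type*} [Fintype Ω] (f g : Ω → ℝ) : ℝ := ∑ n, f n * g n

def mask {Ω : Type*} {M : ℕ} (ψ : Ω → Fin M) (m : Fin M) : Ω → ℝ :=
  fun n => if ψ n = m then 1 else 0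

open Classical in
def update {Ω : Type*} [Fintype Ω] {M : ℕ} [NeZero M]
    (A : (Ω → ℝ) → (Ω → ℝ)) (R : Fin M → Ω → ℝ) (ψ : Ω → Fin M) : Ω → Fin M :=
  fun n =>
    (Finset.univ.filter (fun m => ∀ m', A (mask ψ m') n + R m' n ≤ A (mask ψ m) n + R m n)).min'
      (by
        obtain ⟨m, -, hm⟩ := Finset.exists_max_image (Finset.univ : Finset (Fin M))
          (fun m => A (mask ψ m) n + R m n) ⟨0, Finset.mem_univ 0⟩
        exact ⟨m, Finset.mem_filter.mpr ⟨Finset.mem_univ m, fun m' => hm m' (Finset.mem_univ m')⟩⟩)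

section Aux

variable {Ω : Type*} [Fintype Ω] {M : ℕ} [NeZero M]
  (A : (Ω → ℝ) → (Ω → ℝ)) (R : Fin M → Ω → ℝ)

/-- energy -/
def Ef (ψ φ : Ω → Fin M) : ℝ := ∑ n, (A (mask ψ (φ n)) n + R (φ n) n)

/-- quadratic part -/
def Qf (ψ φ : Ω → Fin M) : ℝ := ∑ m, ip (A (mask ψ m)) (mask φ m)

/-- linear part -/
def Rp (φ : Ω → Fin M) : ℝ := ∑ n, R (φ n) n

lemma ip_comm (f g : Ω → ℝ) : ip f g = ip g f := by
  simp [ip, mul_comm]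

lemma Ef_eq (ψ φ : Ω → Fin M) : Ef A R ψ φ = Qf A ψ φ + Rp R φ := by
  classical
  rw [Ef, Qf, Rp, Finset.sum_add_distrib]
  congr 1
  simp only [ip]
  rw [Finset.sum_comm]
  refine Finset.sum_congr rfl fun n _ => ?_
  simp only [mask, mul_ite, mul_one, mul_zero]
  rw [Finset.sum_ite_eq]
  simp

lemma Qf_symm (hsa : ∀ f g : Ω → ℝ, ip (A f) g = ip f (A g)) (ψ φ : Ω → Fin M) :
    Qf A ψ φ = Qf A φ ψ := by
  refine Finset.sum_congr rfl fun m _ => ?_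
  rw [hsa, ip_comm]

lemma update_max (ψ : Ω → Fin M) (n : Ω) (m' : Fin M) :
    A (mask ψ m') n + R m' n ≤ A (mask ψ (update A R ψ n)) n + R (update A R ψ n) n := by
  classical
  unfold update
  generalize_proofs h
  exact (Finset.mem_filter.mp (Finset.min'_mem _ h)).2 m'

lemma update_le (ψ : Ω → Fin M) (n : Ω) (m : Fin M)
    (hm : ∀ m', A (mask ψ m') n + R m' n ≤ A (mask ψ m) n + R m n) :
    update A R ψ n ≤ m := by
  classical
  unfold update
  generalize_proofs h
  exact Finset.min'_le _ _ (Finset.mem_filter.mpr ⟨Finset.mem_univ m, hm⟩)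

lemma Ef_le_update (ψ φ : Ω → Fin M) : Ef A R ψ φ ≤ Ef A R ψ (update A R ψ) := by
  exact Finset.sum_le_sum fun n _ => update_max A R ψ n (φ n)

/-- If `Ef ψ φ` attains the max value then `update ψ ≤ φ` pointwise. -/
lemma update_le_of_Ef_eq (ψ φ : Ω → Fin M)
    (h : Ef A R ψ φ = Ef A R ψ (update A R ψ)) (n : Ω) : update A R ψ n ≤ φ n := by
  have hpt : ∀ k : Ω, A (mask ψ (φ k)) k + R (φ k) k
      = A (mask ψ (update A R ψ k)) k + R (update A R ψ k) k := by
    by_contra hc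
    push_neg at hc
    obtain ⟨k, hk⟩ := hc
    have hlt : A (mask ψ (φ k)) k + R (φ k) k
        < A (mask ψ (update A R ψ k)) k + R (update A R ψ k) k :=
      lt_of_le_of_ne (update_max A R ψ k (φ k)) hk
    have := Finset.sum_lt_sum (s := Finset.univ)
      (f := fun k => A (mask ψ (φ k)) k + R (φ k) k)
      (g := fun k => A (mask ψ (update A R ψ k)) k + R (update A R ψ k) k)
      (fun k _ => update_max A R ψ k (φ k)) ⟨k, Finset.mem_univ k, hlt⟩
    rw [Ef, Ef] at h
    exact absurd h (ne_of_lt this)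
  refine update_le A R ψ n (φ n) fun m' => ?_
  rw [hpt n]
  exact update_max A R ψ n m'

lemma ip_expand (hlin : IsLinearMap ℝ A) (f g : Ω → ℝ) :
    ip (A (f - g)) (f - g)
      = ip (A f) f - ip (A f) g - ip (A g) f + ip (A g) g := by
  rw [hlin.map_sub]
  simp only [ip, Pi.sub_apply]
  rw [← Finset.sum_sub_distrib, ← Finset.sum_sub_distrib, ← Finset.sum_add_distrib]
  exact Finset.sum_congr rfl fun n _ => by ring

lemma mask_ternary (ψ φ : Ω → Fin M) (m : Fin M) (n : Ω) :
    (mask ψ m - mask φ m) n = -1 ∨ (mask ψ m - mask φ m) n = 0 ∨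
      (mask ψ m - mask φ m) n = 1 := by
  simp only [Pi.sub_apply, mask]
  by_cases h1 : ψ n = m <;> by_cases h2 : φ n = m <;> simp [h1, h2]

lemma Qf_ineq (hlin : IsLinearMap ℝ A)
    (hpos : ∀ f : Ω → ℝ, (∀ n, f n = -1 ∨ f n = 0 ∨ f n = 1) → 0 ≤ ip (A f) f)
    (_hsa : ∀ f g : Ω → ℝ, ip (A f) g = ip f (A g))
    (ψ φ : Ω → Fin M) :
    Qf A ψ φ + Qf A φ ψ ≤ Qf A ψ ψ + Qf A φ φ := by
  have h0 : 0 ≤ ∑ m, ip (A (mask ψ m - mask φ m)) (mask ψ m - mask φ m) :=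
    Finset.sum_nonneg fun m _ => hpos _ (mask_ternary ψ φ m)
  have hexp : ∑ m, ip (A (mask ψ m - mask φ m)) (mask ψ m - mask φ m)
      = Qf A ψ ψ - Qf A ψ φ - Qf A φ ψ + Qf A φ φ := by
    rw [Qf, Qf, Qf, Qf, ← Finset.sum_sub_distrib, ← Finset.sum_sub_distrib,
      ← Finset.sum_add_distrib]
    refine Finset.sum_congr rfl fun m _ => ?_
    exact ip_expand A hlin (mask ψ m) (mask φ m)
  linarith [hexp ▸ h0]

end Aux

theorem stmt1 {Ω : Type*} [Fintype Ω] {M : ℕ} [NeZero M]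
    (A : (Ω → ℝ) → (Ω → ℝ)) (hlin : IsLinearMap ℝ A)
    (hsa : ∀ f g : Ω → ℝ, ip (A f) g = ip f (A g))
    (hpos : ∀ f : Ω → ℝ, (∀ n, f n = -1 ∨ f n = 0 ∨ f n = 1) → 0 ≤ ip (A f) f)
    (R : Fin M → Ω → ℝ) :
    (∀ ψ : Ω → Fin M, update A R (update A R ψ) = ψ → update A R ψ = ψ) ∧
    (∀ ψ₀ : Ω → Fin M, ∃ i₀ : ℕ,
      update A R ((update A R)^[i₀] ψ₀) = (update A R)^[i₀] ψ₀) := by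
  classical
  have part1 : ∀ ψ : Ω → Fin M, update A R (update A R ψ) = ψ → update A R ψ = ψ := by
    intro ψ hcyc
    set ψ' := update A R ψ with hψ'
    have h1 : Ef A R ψ ψ ≤ Ef A R ψ ψ' := Ef_le_update A R ψ ψ
    have h2 : Ef A R ψ' ψ' ≤ Ef A R ψ' ψ := by
      have h := Ef_le_update A R ψ' ψ'
      rwa [hcyc] at h
    have hQ := Qf_ineq A hlin hpos hsa ψ ψ'
    have d1 := Ef_eq A R ψ ψ
    have d2 := Ef_eq A R ψ ψ'
    have d3 := Ef_eq A R ψ' ψ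
    have d4 := Ef_eq A R ψ' ψ'
    have dsym : Qf A ψ ψ' = Qf A ψ' ψ := Qf_symm A hsa ψ ψ'
    have e1 : Ef A R ψ ψ = Ef A R ψ ψ' := by linarith
    have e2 : Ef A R ψ' ψ' = Ef A R ψ' ψ := by linarith
    have le1 : ∀ n, ψ' n ≤ ψ n := update_le_of_Ef_eq A R ψ ψ e1
    have le2 : ∀ n, ψ n ≤ ψ' n := by
      intro n
      have h := update_le_of_Ef_eq A R ψ' ψ' (by rw [hcyc]; exact e2) n
      rwa [hcyc] at h
    funext n
    exact le_antisymm (le1 n) (le2 n)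
  refine ⟨part1, fun ψ₀ => ?_⟩
  set seq : ℕ → (Ω → Fin M) := fun k => (update A R)^[k] ψ₀ with hseqdef
  have hseq : ∀ k, seq (k+1) = update A R (seq k) := fun k =>
    Function.iterate_succ_apply' (update A R) k ψ₀
  set g : ℕ → ℝ := fun k => Qf A (seq k) (seq (k+1)) + Rp R (seq k) + Rp R (seq (k+1))
    with hgdef
  have hg1 : ∀ k, Ef A R (seq (k+1)) (seq k) + Rp R (seq (k+1)) = g k := by
    intro k
    simp only [hgdef]
    linarith [Ef_eq A R (seq (k+1)) (seq k), Qf_symm A hsa (seq (k+1)) (seq k)]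
  have hg2 : ∀ k, Ef A R (seq (k+1)) (seq (k+2)) + Rp R (seq (k+1)) = g (k+1) := by
    intro k
    simp only [hgdef]
    linarith [Ef_eq A R (seq (k+1)) (seq (k+2))]
  have hmono : Monotone g := by
    refine monotone_nat_of_le_succ fun k => ?_
    have h := Ef_le_update A R (seq (k+1)) (seq k)
    rw [← hseq (k+1)] at h
    linarith [hg1 k, hg2 k]
  have hfin : (Set.range g).Finite := by
    have hsub : Set.range g ⊆ Set.range
        (fun p : (Ω → Fin M) × (Ω → Fin M) => Qf A p.1 p.2 + Rp R p.1 + Rp R p.2) := by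
      rintro x ⟨k, rfl⟩
      exact ⟨(seq k, seq (k+1)), rfl⟩
    exact (Set.finite_range _).subset hsub
  obtain ⟨a, ⟨k₀, hk₀⟩, hamax⟩ :=
    Set.Finite.exists_maximalFor id (Set.range g) hfin ⟨g 0, 0, rfl⟩
  subst hk₀
  have hconst : ∀ k ≥ k₀, g k = g k₀ :=
    fun k hk => le_antisymm (hamax ⟨k, rfl⟩ (hmono hk)) (hmono hk)
  have hdec : ∀ k ≥ k₀, ∀ n, seq (k + 2) n ≤ seq k n := by
    intro k hk n
    have e1 := hg1 k
    have e2 := hg2 k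
    have hgg : g k = g (k + 1) := by
      rw [hconst k hk, hconst (k + 1) (le_trans hk (Nat.le_succ k))]
    rw [hseq (k+1)] at e2
    have he : Ef A R (seq (k+1)) (seq k) = Ef A R (seq (k+1)) (update A R (seq (k+1))) := by
      linarith
    have h := update_le_of_Ef_eq A R (seq (k+1)) (seq k) he n
    rwa [← hseq (k+1)] at h
  have hex : ∃ k : ℕ, ∑ n, (seq (k₀ + 2*(k+1)) n).val = ∑ n, (seq (k₀ + 2*k) n).val := by
    by_contra hc
    push_neg at hc
    set f : ℕ → ℕ := fun k => ∑ n, (seq (k₀ + 2*k) n).val with hfdef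
    have hfle : ∀ k, f (k+1) ≤ f k := by
      intro k
      refine Finset.sum_le_sum fun n _ => ?_
      have hidx : k₀ + 2*(k+1) = (k₀ + 2*k) + 2 := by ring
      rw [hidx]
      exact hdec (k₀ + 2*k) (Nat.le_add_right _ _) n
    have hflt : ∀ k, f (k+1) < f k := fun k => lt_of_le_of_ne (hfle k) (hc k)
    have hb : ∀ k, f k + k ≤ f 0 := by
      intro k
      induction k with
      | zero => simp
      | succ k ih =>
        have := hflt k
        omega
    have := hb (f 0 + 1)
    omega
  obtain ⟨k, hkeq⟩ := hex
  have hidx : k₀ + 2*(k+1) = (k₀ + 2*k) + 2 := by ring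
  rw [hidx] at hkeq
  have hle : ∀ n, seq ((k₀ + 2*k) + 2) n ≤ seq (k₀ + 2*k) n :=
    fun n => hdec (k₀ + 2*k) (Nat.le_add_right _ _) n
  have hpteq : seq ((k₀ + 2*k) + 2) = seq (k₀ + 2*k) := by
    funext n
    by_contra hne
    have hvlt : (seq ((k₀ + 2*k) + 2) n).val < (seq (k₀ + 2*k) n).val :=
      lt_of_le_of_ne (hle n) (fun h => hne (Fin.ext h))
    have hslt : ∑ n, (seq ((k₀ + 2*k) + 2) n).val < ∑ n, (seq (k₀ + 2*k) n).val :=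
      Finset.sum_lt_sum (fun n _ => hle n) ⟨n, Finset.mem_univ n, hvlt⟩
    omega
  refine ⟨k₀ + 2*k, part1 _ ?_⟩
  have h1 := hseq (k₀ + 2*k)
  have h2 := hseq (k₀ + 2*k + 1)
  calc update A R (update A R ((update A R)^[k₀ + 2*k] ψ₀))
      = update A R (update A R (seq (k₀ + 2*k))) := rfl
    _ = update A R (seq (k₀ + 2*k + 1)) := by rw [h1]
    _ = seq (k₀ + 2*k + 2) := by rw [h2]
    _ = seq (k₀ + 2*k) := hpteq
    _ = (update A R)^[k₀ + 2*k] ψ₀ := rfl
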